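/- Let s and t be coprime positive integers. Each orbit under cyclic rotation of words with s letters S and t letters T contains exactly one s/t-ballot word; consequently the number of s/t-ballot words equals (1/(s+t))·C(s+t, s). -/

import Mathlib

inductive Letter | S | T
deriving DecidableEq, Repr

open Letter

/-- Number of occurrences of `u` as a (not necessarily contiguous) subsequence of `w`. -/
def cnt (u w : List Letter) : ℕ := w.sublists.count u


/-- `w` is an s/t-ballot word. -/
def IsBallot (s t : ℕ) (w : List Letter) : Prop :=
  w.count S = s ∧ w.count T = t ∧ ∀ p, p <+: w → p.count T * s ≤ p.count S * t

/-!
Give a prefix `p` the height `#S(p)·t - #T(p)·s`, so that a word with `s` letters `S` and `t`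
letters `T` has height `0`. Rotating `u ++ v` to `v ++ u` shifts every prefix height by
`-height u`, so `v ++ u` is a ballot word exactly when `u` is a prefix of minimal height. Such a
prefix always exists, and it is unique among the proper prefixes: two prefixes of equal height
differ by a factor of height `0`, whose letter counts are by coprimality a multiple of `(s, t)`,
so that factor is empty or as long as the whole word. Hence rotation is a bijection from
(ballot word, rotation amount) pairs onto the `C(s+t, s)` words with `s` letters `S` and `t`
letters `T`.
-/

open Finset

theorem Nat.Coprime.add_eq_zero_or_add_le {s t a b : ℕ} (hst : s.Coprime t) (h : a * t = b * s) :
    a + b = 0 ∨ s + t ≤ a + b := by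
  obtain ⟨k, rfl⟩ := hst.dvd_of_dvd_mul_right ⟨b, h.trans (mul_comm b s)⟩
  rcases s.eq_zero_or_pos with rfl | hs
  · obtain rfl : t = 1 := (Nat.coprime_zero_left t).1 hst
    omega
  · obtain rfl : b = k * t := Nat.eq_of_mul_eq_mul_left hs (by rw [mul_comm s b, ← h]; ring)
    rcases k with _ | k
    · simp
    · exact .inr (by nlinarith)

theorem Nat.Coprime.add_pos {s t : ℕ} (hst : s.Coprime t) : 0 < s + t := by
  by_contra! h
  obtain ⟨rfl, rfl⟩ : s = 0 ∧ t = 0 := by omega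
  simp at hst

theorem List.prefix_append_iff {α : Type*} {l₁ l₂ p : List α} :
    p <+: l₁ ++ l₂ ↔ p <+: l₁ ∨ ∃ q, q <+: l₂ ∧ p = l₁ ++ q := by
  refine ⟨fun hp => ?_, ?_⟩
  · rcases prefix_or_prefix_of_prefix hp (prefix_append l₁ l₂) with h | ⟨q, rfl⟩
    · exact .inl h
    · exact .inr ⟨q, (prefix_append_right_inj l₁).1 hp, rfl⟩
  · rintro (h | ⟨q, hq, rfl⟩)
    · exact h.trans (prefix_append l₁ l₂)
    · exact (prefix_append_right_inj l₁).2 hq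

theorem List.rotate_fin_add {α : Type*} {n : ℕ} {l : List α} (hl : l.length = n) (a b : Fin n) :
    l.rotate ↑(a + b) = (l.rotate a).rotate b := by
  subst hl
  rw [Fin.val_add, rotate_mod, rotate_rotate]

theorem List.count_ofFn {α : Type*} [DecidableEq α] {n : ℕ} (f : Fin n → α) (a : α) :
    (ofFn f).count a = #{i | f i = a} := by
  induction n with
  | zero => simp
  | succ n ih =>
    rw [ofFn_succ, count_cons, ih]
    simp only [Finset.card_filter, Fin.sum_univ_succ, beq_iff_eq]
    exact Nat.add_comm _ _

namespace BallotWord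

variable {s t : ℕ}

theorem count_S_add_count_T (l : List Letter) : l.count S + l.count T = l.length := by
  induction l with
  | nil => rfl
  | cons a l ih => cases a <;> simp <;> omega

theorem length_eq_add {w : List Letter} (hS : w.count S = s) (hT : w.count T = t) :
    w.length = s + t := by
  rw [← count_S_add_count_T, hS, hT]

abbrev Words (s t : ℕ) := {w : List Letter // w.count S = s ∧ w.count T = t}

def height (s t : ℕ) (p : List Letter) : ℤ := p.count S * t - p.count T * s

theorem height_append (p q : List Letter) :
    height s t (p ++ q) = height s t p + height s t q := by
  simp only [height, List.count_append]
  push_cast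
  ring

theorem height_eq_zero_iff {p : List Letter} :
    height s t p = 0 ↔ p.count S * t = p.count T * s := by
  rw [height, sub_eq_zero]
  exact_mod_cast Iff.rfl

theorem height_nonneg_iff {p : List Letter} :
    0 ≤ height s t p ↔ p.count T * s ≤ p.count S * t := by
  rw [height, sub_nonneg]
  exact_mod_cast Iff.rfl

theorem height_eq_zero {w : List Letter} (hS : w.count S = s) (hT : w.count T = t) :
    height s t w = 0 :=
  height_eq_zero_iff.2 (by rw [hS, hT, mul_comm])

theorem eq_nil_or_add_le_length_of_height_eq_zero (hst : s.Coprime t) {q : List Letter}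
    (hq : height s t q = 0) : q = [] ∨ s + t ≤ q.length := by
  rw [← List.length_eq_zero_iff, ← count_S_add_count_T]
  exact hst.add_eq_zero_or_add_le (height_eq_zero_iff.1 hq)

theorem isBallot_iff {w : List Letter} : IsBallot s t w ↔
    w.count S = s ∧ w.count T = t ∧ ∀ p, p <+: w → 0 ≤ height s t p := by
  simp only [IsBallot, height_nonneg_iff]

theorem isBallot_append_comm_iff {u v : List Letter} (hS : (u ++ v).count S = s)
    (hT : (u ++ v).count T = t) :
    IsBallot s t (v ++ u) ↔ ∀ x, x <+: u ++ v → height s t u ≤ height s t x := by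
  have hv : height s t v = -height s t u := by
    have := height_eq_zero hS hT
    rw [height_append] at this
    linarith
  have hcomm := List.perm_append_comm (l₁ := u) (l₂ := v)
  rw [isBallot_iff, ← hcomm.count_eq, ← hcomm.count_eq, and_iff_right hS, and_iff_right hT]
  constructor
  · intro hvu x hx
    rcases List.prefix_append_iff.1 hx with hx | ⟨q, hq, rfl⟩
    · have := hvu (v ++ x) ((List.prefix_append_right_inj v).2 hx)
      rw [height_append] at this
      linarith
    · have := hvu q (hq.trans (List.prefix_append v u))
      rw [height_append]
      linarith
  · intro huv p hp
    rcases List.prefix_append_iff.1 hp with hp | ⟨q, hq, rfl⟩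
    · have := huv (u ++ p) ((List.prefix_append_right_inj u).2 hp)
      rw [height_append] at this
      linarith
    · have := huv q (hq.trans (List.prefix_append u v))
      rw [height_append]
      linarith

theorem isBallot_rotate_iff {w : List Letter} (hS : w.count S = s) (hT : w.count T = t) {n : ℕ}
    (hn : n ≤ w.length) :
    IsBallot s t (w.rotate n) ↔ ∀ x, x <+: w → height s t (w.take n) ≤ height s t x := by
  rw [List.rotate_eq_drop_append_take hn]
  have h := List.take_append_drop n w
  rw [← h] at hS hT
  have := isBallot_append_comm_iff hS hT
  rwa [h] at this

theorem exists_prefix_forall_height_le (s t : ℕ) (w : List Letter) :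
    ∃ u, u <+: w ∧ ∀ x, x <+: w → height s t u ≤ height s t x := by
  obtain ⟨u, hu, hmin⟩ := w.inits.toFinset.exists_min_image (height s t) ⟨[], by simp⟩
  simp only [List.mem_toFinset, List.mem_inits] at hu hmin
  exact ⟨u, hu, hmin⟩

theorem eq_of_isBallot_rotate (hst : s.Coprime t) {w : List Letter} (hS : w.count S = s)
    (hT : w.count T = t) {m n : ℕ} (hmn : m ≤ n) (hn : n < s + t)
    (hm_ballot : IsBallot s t (w.rotate m)) (hn_ballot : IsBallot s t (w.rotate n)) : m = n := by
  have hlen := length_eq_add hS hT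
  have hm_min := (isBallot_rotate_iff hS hT (by omega)).1 hm_ballot _ (List.take_prefix n w)
  have hn_min := (isBallot_rotate_iff hS hT (by omega)).1 hn_ballot _ (List.take_prefix m w)
  have hsplit : w.take n = w.take m ++ (w.drop m).take (n - m) := by
    rw [← List.take_add, Nat.add_sub_cancel' hmn]
  rw [hsplit, height_append] at hm_min hn_min
  have hq : height s t ((w.drop m).take (n - m)) = 0 := by linarith
  rcases eq_nil_or_add_le_length_of_height_eq_zero hst hq with h | h
  · have := congrArg List.length h
    simp only [List.length_take, List.length_drop, List.length_nil] at this
    omega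
  · simp only [List.length_take, List.length_drop] at h
    omega

theorem existsUnique_isBallot_rotate (hst : s.Coprime t) {w : List Letter} (hS : w.count S = s)
    (hT : w.count T = t) : ∃! n : Fin (s + t), IsBallot s t (w.rotate n) := by
  have hlen := length_eq_add hS hT
  refine existsUnique_of_exists_of_unique ?_ fun m n hm hn => ?_
  · obtain ⟨u, hu, hmin⟩ := exists_prefix_forall_height_le s t w
    refine ⟨⟨u.length % (s + t), Nat.mod_lt _ hst.add_pos⟩, ?_⟩
    change IsBallot s t (w.rotate (u.length % (s + t)))
    rw [← hlen, List.rotate_mod, isBallot_rotate_iff hS hT hu.length_le,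
      ← List.prefix_iff_eq_take.1 hu]
    exact hmin
  · rcases le_total m n with h | h
    · exact Fin.ext (eq_of_isBallot_rotate hst hS hT h n.2 hm hn)
    · exact Fin.ext (eq_of_isBallot_rotate hst hS hT h m.2 hn hm).symm

def rotateBallot (p : {w // IsBallot s t w} × Fin (s + t)) : Words s t :=
  ⟨p.1.1.rotate p.2, by
    rw [(List.rotate_perm _ _).count_eq, (List.rotate_perm _ _).count_eq]
    exact ⟨p.1.2.1, p.1.2.2.1⟩⟩

theorem rotateBallot_bijective (hst : s.Coprime t) :
    Function.Bijective (rotateBallot (s := s) (t := t)) := by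
  have : NeZero (s + t) := ⟨hst.add_pos.ne'⟩
  constructor
  · rintro ⟨⟨b, hb⟩, m⟩ ⟨⟨b', hb'⟩, n⟩ h
    have h : b.rotate m = b'.rotate n := congrArg Subtype.val h
    have hb_eq : b'.rotate ↑(n + -m) = b := by
      rw [List.rotate_fin_add (length_eq_add hb'.1 hb'.2.1), ← h,
        ← List.rotate_fin_add (length_eq_add hb.1 hb.2.1), add_neg_cancel, Fin.val_zero,
        List.rotate_zero]
    -- `b'` is a ballot rotation of itself both by `0` and by `n - m`
    have hnm : n + -m = 0 := (existsUnique_isBallot_rotate hst hb'.1 hb'.2.1).unique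
      (hb_eq ▸ hb) (by simpa using hb')
    obtain rfl : n = m := add_neg_eq_zero.1 hnm
    rw [hnm, Fin.val_zero, List.rotate_zero] at hb_eq
    subst hb_eq
    rfl
  · rintro ⟨w, hS, hT⟩
    obtain ⟨n, hn, -⟩ := existsUnique_isBallot_rotate hst hS hT
    refine ⟨(⟨w.rotate n, hn⟩, -n), Subtype.ext ?_⟩
    change (w.rotate n).rotate ↑(-n) = w
    rw [← List.rotate_fin_add (length_eq_add hS hT), add_neg_cancel, Fin.val_zero,
      List.rotate_zero]

def lettersOf {n : ℕ} (A : Finset (Fin n)) : List Letter :=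
  List.ofFn fun i => if i ∈ A then S else T

theorem count_S_lettersOf {n : ℕ} (A : Finset (Fin n)) : (lettersOf A).count S = #A := by
  rw [lettersOf, List.count_ofFn]
  congr 1
  ext i
  by_cases hi : i ∈ A <;> simp [hi]

theorem count_T_lettersOf {n : ℕ} (A : Finset (Fin n)) : (lettersOf A).count T = n - #A := by
  have := count_S_add_count_T (lettersOf A)
  rw [count_S_lettersOf, lettersOf, List.length_ofFn, ← lettersOf] at this
  omega

theorem lettersOf_injective {n : ℕ} : Function.Injective (lettersOf (n := n)) := by
  intro A B h
  ext i
  have := congrFun (List.ofFn_injective h) i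
  by_cases hA : i ∈ A <;> by_cases hB : i ∈ B <;> simp_all

theorem exists_lettersOf_eq {n : ℕ} {w : List Letter} (hw : w.length = n) :
    ∃ A : Finset (Fin n), lettersOf A = w := by
  subst hw
  refine ⟨({i | w[i] = S} : Finset (Fin w.length)),
    List.ext_getElem (by simp [lettersOf]) fun i _ _ => ?_⟩
  simp only [lettersOf, List.getElem_ofFn, Finset.mem_filter, Finset.mem_univ, true_and]
  split_ifs with hi
  · exact hi.symm
  · cases hw : w[i] <;> simp_all

theorem card_words (s t : ℕ) : Nat.card (Words s t) = (s + t).choose s := by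
  let f : {A : Finset (Fin (s + t)) // #A = s} → Words s t := fun A =>
    ⟨lettersOf A.1, by rw [count_S_lettersOf, count_T_lettersOf, A.2]; omega⟩
  have hf : Function.Bijective f := by
    refine ⟨fun A B h => Subtype.ext (lettersOf_injective (congrArg Subtype.val h)), ?_⟩
    rintro ⟨w, hS, hT⟩
    obtain ⟨A, hA⟩ := exists_lettersOf_eq (length_eq_add hS hT)
    exact ⟨⟨A, by rw [← count_S_lettersOf, hA, hS]⟩, Subtype.ext hA⟩
  rw [← Nat.card_eq_of_bijective f hf, Nat.card_eq_fintype_card, Fintype.card_finset_len,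
    Fintype.card_fin]

end BallotWord

open BallotWord in
theorem stmt6_general (s t : ℕ) (hst : Nat.Coprime s t) :
    (∀ w : List Letter, w.count S = s → w.count T = t →
        ∃! n : Fin (s + t), IsBallot s t (w.rotate n)) ∧
      Nat.card {w : List Letter // IsBallot s t w} * (s + t) = (s + t).choose s := by
  refine ⟨fun w => existsUnique_isBallot_rotate hst, ?_⟩
  rw [← card_words, ← Nat.card_eq_of_bijective _ (rotateBallot_bijective hst), Nat.card_prod,
    Nat.card_fin]

theorem stmt6 (s t : ℕ) (hs : 0 < s) (ht : 0 < t) (hst : Nat.Coprime s t) :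
    (∀ w : List Letter, w.count S = s → w.count T = t →
        ∃! n : Fin (s + t), IsBallot s t (w.rotate n)) ∧
      Nat.card {w : List Letter // IsBallot s t w} * (s + t) = (s + t).choose s :=
  stmt6_general s t hst
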